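/- arXiv:1806.03871 — 4 statements merged into one kernel-verified Lean document; each statement's English description precedes it below -/
import Mathlib

section
/- Every Neumann subgroup M of Γ = Δ(p,q,∞) is a maximal nonparabolic subgroup of Γ: M contains no parabolic element, and every subgroup of Γ that properly contains M contains a parabolic element. -/
def triangleRels (p q : ℕ) : Set (FreeGroup (Fin 2)) :=
  {FreeGroup.of 0 ^ p, FreeGroup.of 1 ^ q}

/-- The triangle group Δ(p,q,∞) = ⟨X, Y ∣ X^p = Y^q = 1⟩ ≅ C_p * C_q. -/
abbrev Tri (p q : ℕ) : Type := PresentedGroup (triangleRels p q)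

def triX (p q : ℕ) : Tri p q := PresentedGroup.of 0
def triY (p q : ℕ) : Tri p q := PresentedGroup.of 1
def triZ (p q : ℕ) : Tri p q := (triX p q * triY p q)⁻¹

/-- An element is parabolic if it is conjugate to a nonzero power of Z. -/
def IsParabolic {p q : ℕ} (g : Tri p q) : Prop :=
  ∃ (k : ℤ) (c : Tri p q), k ≠ 0 ∧ g = c * (triZ p q) ^ k * c⁻¹

/-- A subgroup is nonparabolic if it contains no parabolic element. -/
def Nonparabolic {p q : ℕ} (M : Subgroup (Tri p q)) : Prop :=
  ∀ g ∈ M, ¬ IsParabolic g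

/-- A Neumann subgroup: a complement to P = ⟨Z⟩, i.e. M ∩ P = 1 and MP = Γ. -/
def IsNeumann {p q : ℕ} (M : Subgroup (Tri p q)) : Prop :=
  M ⊓ Subgroup.zpowers (triZ p q) = ⊥ ∧
  ∀ g : Tri p q, ∃ m ∈ M, ∃ k : ℤ, g = m * (triZ p q) ^ k

/-- Conjugacy of subgroups (restricted to those satisfying a property `P`). -/
def conjRel {G : Type*} [Group G] (P : Subgroup G → Prop)
    (M N : {M : Subgroup G // P M}) : Prop :=
  ∃ g : G, (N : Subgroup G) = Subgroup.map (MulAut.conj g).toMonoidHom (M : Subgroup G)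

/-! ### Auxiliary: Z has infinite order -/

/-- The target family: `C_p` at index 0, `C_q` at index 1. -/
abbrev TriF (p q : ℕ) : Fin 2 → Type := fun i => Multiplicative (ZMod (if i = 0 then p else q))

def triGen (p q : ℕ) (i : Fin 2) : TriF p q i := Multiplicative.ofAdd 1

lemma triGen0_pow (p q : ℕ) : triGen p q 0 ^ p = 1 := by
  show Multiplicative.ofAdd (1 : ZMod p) ^ p = 1
  rw [← ofAdd_nsmul]
  simp [ZMod.natCast_self]

lemma triGen1_pow (p q : ℕ) : triGen p q 1 ^ q = 1 := by
  show Multiplicative.ofAdd (1 : ZMod q) ^ q = 1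
  rw [← ofAdd_nsmul]
  simp [ZMod.natCast_self]

/-- The canonical homomorphism `Tri p q →* C_p * C_q`. -/
def triHom (p q : ℕ) : Tri p q →* Monoid.CoprodI (TriF p q) :=
  PresentedGroup.toGroup (f := fun i => Monoid.CoprodI.of (triGen p q i)) (by
    rintro r (h | h) <;> subst h
    · rw [map_pow, FreeGroup.lift_apply_of, ← map_pow, triGen0_pow, map_one]
    · rw [map_pow, FreeGroup.lift_apply_of, ← map_pow, triGen1_pow, map_one])

lemma triHom_X (p q : ℕ) : triHom p q (triX p q) = Monoid.CoprodI.of (triGen p q 0) :=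
  PresentedGroup.toGroup.of _

lemma triHom_Y (p q : ℕ) : triHom p q (triY p q) = Monoid.CoprodI.of (triGen p q 1) :=
  PresentedGroup.toGroup.of _

lemma triGen_ne_one (p q : ℕ) (hp : 2 ≤ p) (hq : 2 ≤ q) (i : Fin 2) :
    triGen p q i ≠ 1 := by
  fin_cases i
  · show Multiplicative.ofAdd (1 : ZMod p) ≠ 1
    haveI : NeZero p := ⟨by omega⟩
    haveI : Fact (1 < p) := ⟨by omega⟩
    exact fun h => one_ne_zero (α := ZMod p) (by simp at h)
  · show Multiplicative.ofAdd (1 : ZMod q) ≠ 1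
    haveI : Fact (1 < q) := ⟨by omega⟩
    exact fun h => one_ne_zero (α := ZMod q) (by simp at h)

lemma word_prod_ne_one {p q : ℕ} (hp : 2 ≤ p) (hq : 2 ≤ q) (n : ℕ) :
    (Monoid.CoprodI.of (triGen p q 0) * Monoid.CoprodI.of (triGen p q 1)) ^ (n + 1) ≠ 1 := by
  classical
  set g0 := triGen p q 0
  set g1 := triGen p q 1
  have h0 : g0 ≠ 1 := triGen_ne_one p q hp hq 0
  have h1 : g1 ≠ 1 := triGen_ne_one p q hp hq 1
  have key : ∀ n : ℕ, ∃ w : Monoid.CoprodI.NeWord (TriF p q) 0 1,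
      w.prod = (Monoid.CoprodI.of g0 * Monoid.CoprodI.of g1) ^ (n + 1) := by
    intro n
    induction n with
    | zero =>
      refine ⟨(Monoid.CoprodI.NeWord.singleton g0 h0).append (by decide)
        (Monoid.CoprodI.NeWord.singleton g1 h1), ?_⟩
      simp
    | succ n ih =>
      obtain ⟨w, hw⟩ := ih
      refine ⟨((Monoid.CoprodI.NeWord.singleton g0 h0).append (by decide)
        (Monoid.CoprodI.NeWord.singleton g1 h1)).append (by decide) w, ?_⟩
      rw [pow_succ']
      simp [hw]
  obtain ⟨w, hw⟩ := key n
  intro hcontra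
  have hprod : w.toWord.prod = Monoid.CoprodI.Word.prod (Monoid.CoprodI.Word.empty) := by
    rw [Monoid.CoprodI.Word.prod_empty]
    exact hw.trans hcontra
  have hinj : Function.Injective
      (Monoid.CoprodI.Word.prod : Monoid.CoprodI.Word (TriF p q) → Monoid.CoprodI (TriF p q)) :=
    (Monoid.CoprodI.Word.equiv (M := TriF p q)).symm.injective
  have := hinj hprod
  have hne : w.toWord.toList ≠ [] := Monoid.CoprodI.NeWord.toList_ne_nil w
  rw [this] at hne
  exact hne rfl

lemma triZ_zpow_eq_one {p q : ℕ} (hp : 2 ≤ p) (hq : 2 ≤ q) {k : ℤ}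
    (h : (triZ p q) ^ k = 1) : k = 0 := by
  by_contra hk
  have himg : (triHom p q (triZ p q)) ^ k = 1 := by
    rw [← map_zpow, h, map_one]
  have hZ : triHom p q (triZ p q)
      = (Monoid.CoprodI.of (triGen p q 0) * Monoid.CoprodI.of (triGen p q 1))⁻¹ := by
    rw [triZ, map_inv, map_mul, triHom_X, triHom_Y]
  set g := Monoid.CoprodI.of (triGen p q 0) * Monoid.CoprodI.of (triGen p q 1) with hg
  have hgk : g ^ (-k) = 1 := by
    rw [zpow_neg, ← inv_zpow, ← hZ]
    exact himg
  have h1 : g ^ k = 1 := by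
    rw [← neg_neg k, zpow_neg, hgk, inv_one]
  have hnat : g ^ (k.natAbs) = 1 := by
    rcases Int.natAbs_eq k with he | he
    · rw [← zpow_natCast, ← he]; exact h1
    · have h2 : ((k.natAbs : ℤ)) = -k := by omega
      rw [← zpow_natCast, h2]; exact hgk
  obtain ⟨n, hn⟩ : ∃ n, k.natAbs = n + 1 := by
    have : k.natAbs ≠ 0 := Int.natAbs_ne_zero.mpr hk
    exact ⟨k.natAbs - 1, by omega⟩
  rw [hn] at hnat
  exact word_prod_ne_one hp hq n hnat

/-- Every Neumann subgroup of Δ(p,q,∞) is a maximal nonparabolic subgroup: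
it contains no parabolic element, and every subgroup properly containing it
contains a parabolic element. -/
theorem neumann_is_maximal_nonparabolic (p q : ℕ) (hp : 3 ≤ p) (hq : 2 ≤ q)
    (M : Subgroup (Tri p q)) (hM : IsNeumann M) :
    Nonparabolic M ∧ ∀ N : Subgroup (Tri p q), M < N → ∃ g ∈ N, IsParabolic g := by
  obtain ⟨hdisj, hfact⟩ := hM
  have hp2 : 2 ≤ p := by omega
  have hZ : ∀ k : ℤ, (triZ p q) ^ k = 1 → k = 0 := fun k h => triZ_zpow_eq_one hp2 hq h
  constructor
  · rintro g hg ⟨k, c, hk, rfl⟩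
    obtain ⟨m, hm, j, rfl⟩ := hfact c
    have heq : (m * triZ p q ^ j) * triZ p q ^ k * (m * triZ p q ^ j)⁻¹
        = m * triZ p q ^ k * m⁻¹ := by
      rw [mul_inv_rev]
      have : triZ p q ^ j * triZ p q ^ k * (triZ p q ^ j)⁻¹ = triZ p q ^ k := by
        rw [← zpow_add, ← zpow_sub]
        ring_nf
      group
    rw [heq] at hg
    have hmem : triZ p q ^ k ∈ M ⊓ Subgroup.zpowers (triZ p q) := by
      constructor
      · have : m⁻¹ * (m * triZ p q ^ k * m⁻¹) * m ∈ M :=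
          M.mul_mem (M.mul_mem (M.inv_mem hm) hg) hm
        simpa [mul_assoc] using this
      · exact Subgroup.zpow_mem _ (Subgroup.mem_zpowers _) k
    rw [hdisj, Subgroup.mem_bot] at hmem
    exact hk (hZ k hmem)
  · intro N hlt
    obtain ⟨n, hnN, hnM⟩ := SetLike.exists_of_lt hlt
    obtain ⟨m, hm, k, rfl⟩ := hfact n
    have hk : k ≠ 0 := by
      rintro rfl
      simp only [zpow_zero, mul_one] at hnM
      exact hnM hm
    refine ⟨triZ p q ^ k, ?_, k, 1, hk, by group⟩
    have : m⁻¹ * (m * triZ p q ^ k) ∈ N :=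
      N.mul_mem (N.inv_mem (hlt.le hm)) hnN
    simpa [mul_assoc] using this
end

section
/- Let G be a group acting transitively on ℤ and generated by two elements a and b. Suppose a fixes an integer i and b fixes an integer j with i ≡ j (mod n) for some integer n ≥ 2. Then congruence modulo n on ℤ is not G-invariant: there exist g ∈ G and integers s, t with s ≡ t (mod n) but g·s ≢ g·t (mod n). -/
/-- If a group `G` acts transitively on ℤ and is generated by `a` and `b`,
where `a` fixes `i`, `b` fixes `j`, and `i ≡ j (mod n)` for some `n ≥ 2`,
then congruence mod `n` is not `G`-invariant. -/
theorem congruence_not_invariant (G : Type*) [Group G] [MulAction G ℤ]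
    (htrans : ∀ s t : ℤ, ∃ g : G, g • s = t)
    (a b : G) (hgen : Subgroup.closure {a, b} = (⊤ : Subgroup G))
    (i j : ℤ) (ha : a • i = i) (hb : b • j = j)
    (n : ℤ) (hn : 2 ≤ n) (hij : Int.ModEq n i j) :
    ∃ (g : G) (s t : ℤ), Int.ModEq n s t ∧ ¬ Int.ModEq n (g • s) (g • t) := by
  by_contra h
  push_neg at h
  have hinv : ∀ (g : G) (s t : ℤ), Int.ModEq n s t → Int.ModEq n (g • s) (g • t) := by
    intro g s t hst
    by_contra hc
    exact hc (h g s t hst)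
  -- every element of G fixes the class of i
  have key : ∀ g : G, Int.ModEq n (g • i) i := by
    intro g
    have hg : g ∈ Subgroup.closure {a, b} := hgen ▸ Subgroup.mem_top g
    induction hg using Subgroup.closure_induction with
    | mem x hx =>
      rcases hx with rfl | rfl
      · rw [ha]
      · calc (x • i : ℤ) ≡ x • j [ZMOD n] := hinv x i j hij
          _ = j := hb
          _ ≡ i [ZMOD n] := hij.symm
    | one => simp
    | mul x y _ _ hx hy =>
      calc ((x * y) • i : ℤ) = x • (y • i) := mul_smul x y i
        _ ≡ x • i [ZMOD n] := hinv x _ _ hy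
        _ ≡ i [ZMOD n] := hx
    | inv x _ hx =>
      have := hinv x⁻¹ _ _ hx.symm
      simpa using this
  obtain ⟨g, hg⟩ := htrans i (i + 1)
  have := key g
  rw [hg] at this
  have : (n : ℤ) ∣ 1 := by
    have := Int.ModEq.dvd this
    simpa using this
  have := Int.le_of_dvd one_pos this
  omega
end

section
/- For each integer p ≥ 3, the Hecke group Γ = Δ(p,2,∞) ≅ C_p * C_2 has uncountably many conjugacy classes of nonparabolic maximal subgroups; that is, the set of conjugacy classes of subgroups of Γ that contain no parabolic element and are maximal proper subgroups of Γ is uncountable. -/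
/-!
Each subgroup is the stabiliser of `0` in a transitive action of `Γ` on `ℤ` in which `Z` acts as
`n ↦ n + 1`. No conjugate of a nonzero power of `Z` fixes a point, so these stabilisers are
nonparabolic, and since `Z` acts regularly the stabiliser determines the action.

The actions come from an involution `Y` exchanging the terms of a decreasing sequence of
nonpositive integers with those of an increasing sequence of positive ones; then `X = Z⁻¹ Y`
has order `p` as soon as the `k`-th gap on the left and the `k`-th gap on the right add up to `p`.
Putting gaps `p - 1` on the left at positions `4^(i+1) + [i ∈ S]` gives one action for every
`S ⊆ ℕ`. For maximality, the orbit of `0` under an intermediate subgroup is a subgroup `dℤ`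
invariant under `X`; a long run of left gaps `1` contains a multiple of `d` that `X` sends to its
predecessor, forcing `d = 1`. As `Γ` is countable, every conjugacy class is countable.
-/

open Function

lemma StrictMono.notMem_range_of_lt_of_lt {α : Type*} [Preorder α] {f : ℕ → α}
    (hf : StrictMono f) {i : ℕ} {x : α} (h₁ : f i < x) (h₂ : x < f (i + 1)) :
    x ∉ Set.range f := by
  rintro ⟨j, rfl⟩
  rcases le_or_gt j i with hj | hj
  · exact (hf.monotone hj).not_gt h₁
  · exact (hf.monotone hj).not_gt h₂

lemma StrictAnti.notMem_range_of_lt_of_lt {α : Type*} [Preorder α] {f : ℕ → α}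
    (hf : StrictAnti f) {i : ℕ} {x : α} (h₁ : f (i + 1) < x) (h₂ : x < f i) :
    x ∉ Set.range f := by
  rintro ⟨j, rfl⟩
  rcases le_or_gt j i with hj | hj
  · exact (hf.antitone hj).not_gt h₂
  · exact (hf.antitone hj).not_gt h₁

lemma Nat.exists_le_and_lt_succ_of_le {α : Type*} [LinearOrder α] {f : ℕ → α} {x : α}
    (h0 : f 0 ≤ x) (hx : ∃ k, x < f k) : ∃ k, f k ≤ x ∧ x < f (k + 1) := by
  classical
  obtain ⟨m, hm⟩ : ∃ m, Nat.find hx = m + 1 :=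
    Nat.exists_eq_succ_of_ne_zero fun h => (Nat.find_spec hx).not_ge (h ▸ h0)
  exact ⟨m, not_lt.mp (Nat.find_min hx (by omega)), hm ▸ Nat.find_spec hx⟩

lemma Int.exists_dvd_not_modEq (a c : ℤ) {d q : ℤ} (hd : 0 < d) (h : ¬ (q ∣ d ∧ q ∣ c)) :
    ∃ v, a < v ∧ v ≤ a + 2 * d ∧ d ∣ v ∧ ¬ v ≡ c [ZMOD q] := by
  set v := (a / d + 1) * d
  have hv : a < v ∧ v ≤ a + d := by
    have := Int.ediv_mul_le a hd.ne'
    exact ⟨Int.lt_ediv_add_one_mul_self a hd, by linarith [add_mul (a / d) 1 d]⟩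
  by_cases hv₁ : v ≡ c [ZMOD q]
  · refine ⟨v + d, by omega, by omega, dvd_add (dvd_mul_left _ _) dvd_rfl, fun hv₂ => h ?_⟩
    have hqd : q ∣ d := by simpa using (hv₁.trans hv₂.symm).dvd
    have hqv : q ∣ v := hqd.trans (dvd_mul_left _ _)
    exact ⟨hqd, by simpa using dvd_add hv₁.dvd hqv⟩
  · exact ⟨v, hv.1, by omega, dvd_mul_left _ _, hv₁⟩

section ConjugacyClasses

variable {G : Type*} [Group G]

lemma conjRel_equivalence (P : Subgroup G → Prop) : Equivalence (conjRel P) where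
  refl M := ⟨1, by ext; simp⟩
  symm := by
    rintro M N ⟨g, hg⟩
    refine ⟨g⁻¹, ?_⟩
    ext x
    simp [hg, mul_assoc]
  trans := by
    rintro M N K ⟨g, hg⟩ ⟨h, hh⟩
    refine ⟨h * g, ?_⟩
    ext x
    simp [hh, hg, mul_assoc]

/-- After choosing a representative of each class, `i ↦ (class of f i, conjugator)` is injective
into `Quot (conjRel P) × G`. -/
lemma uncountable_quot_conjRel {ι : Type*} [Countable G] [Uncountable ι]
    {P : Subgroup G → Prop} (f : ι → Subgroup G) (hf : Injective f) (hP : ∀ i, P (f i)) :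
    Uncountable (Quot (conjRel P)) := by
  rw [← not_countable_iff]
  intro hQ
  let cls : ι → Quot (conjRel P) := fun i => Quot.mk _ ⟨f i, hP i⟩
  have hconj : ∀ i, ∃ g : G, f i = ((cls i).out : Subgroup G).map (MulAut.conj g).toMonoidHom :=
    fun i => (conjRel_equivalence P).eqvGen_iff.mp (Quot.eqvGen_exact (Quot.out_eq (cls i)))
  choose g hg using hconj
  have hinj : Injective fun i => (cls i, g i) := by
    intro i j hij
    simp only [Prod.mk.injEq] at hij
    exact hf (by rw [hg i, hg j, hij.1, hij.2])
  exact not_countable_iff.mpr ‹Uncountable ι› hinj.countable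

end ConjugacyClasses

section TranslationActions

open Equiv

variable {G : Type*} [Group G] {ρ : G →* Perm ℤ} {z : G}

def stabZero (ρ : G →* Perm ℤ) : Subgroup G :=
  (MulAction.stabilizer (Perm ℤ) (0 : ℤ)).comap ρ

@[simp] lemma mem_stabZero {g : G} : g ∈ stabZero ρ ↔ ρ g 0 = 0 :=
  MulAction.mem_stabilizer_iff

lemma apply_zpow_of_eq_addRight (hz : ρ z = Equiv.addRight 1) (k n : ℤ) :
    ρ (z ^ k) n = n + k := by
  induction k using Int.induction_on generalizing n with
  | zero => simp
  | succ k ih => rw [zpow_add_one, map_mul, Perm.mul_apply, hz, ih]; simp; ring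
  | pred k ih =>
    rw [zpow_sub_one, map_mul, Perm.mul_apply, map_inv, hz, ih]
    simp [Perm.inv_def]; ring

def translationSubgroup (z : G) (N : Subgroup G) : AddSubgroup ℤ where
  carrier := {t | z ^ t ∈ N}
  zero_mem' := by simp
  add_mem' ha hb := by simpa [zpow_add] using N.mul_mem ha hb
  neg_mem' ha := by simpa [zpow_neg] using N.inv_mem ha

variable (hz : ρ z = Equiv.addRight 1)
include hz

lemma zpow_neg_mul_mem_stabZero (g : G) : z ^ (-ρ g 0) * g ∈ stabZero ρ := by
  rw [mem_stabZero, map_mul, Perm.mul_apply, apply_zpow_of_eq_addRight hz, add_neg_cancel]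

lemma conj_zpow_notMem_stabZero {k : ℤ} (hk : k ≠ 0) (c : G) : c * z ^ k * c⁻¹ ∉ stabZero ρ := by
  intro h
  have : ρ (z ^ k) (ρ c⁻¹ 0) = ρ c⁻¹ 0 := by
    apply (ρ c).injective
    rw [mem_stabZero, map_mul, map_mul, Perm.mul_apply, Perm.mul_apply] at h
    rw [h, ← Perm.mul_apply, ← map_mul, mul_inv_cancel, map_one, Perm.one_apply]
  rw [apply_zpow_of_eq_addRight hz] at this
  omega

lemma stabZero_ne_top : stabZero ρ ≠ ⊤ := fun h => by
  simpa [hz] using (h ▸ Subgroup.mem_top z : z ∈ stabZero ρ)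

lemma zpow_mem_of_stabZero_le {N : Subgroup G} (hN : stabZero ρ ≤ N) {n : G} (hn : n ∈ N) :
    z ^ ρ n 0 ∈ N := by
  simpa using N.mul_mem hn (N.inv_mem (hN (zpow_neg_mul_mem_stabZero hz n)))

/-- For `stabZero ρ < N`, the exponents `t` with `z ^ t ∈ N` form a subgroup `dℤ` containing the
orbit `N • 0`, so it is stable under `ρ x`; `hwit` then forces `d = 1`, i.e. `N` is transitive. -/
lemma isCoatom_stabZero {x : G} (hx : ρ x 0 = 0)
    (hwit : ∀ d : ℕ, 2 ≤ d → ∃ v : ℤ, (d : ℤ) ∣ v ∧ ¬ (d : ℤ) ∣ ρ x v) :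
    IsCoatom (stabZero ρ) := by
  refine ⟨stabZero_ne_top hz, fun N hlt => ?_⟩
  have hmem : ∀ n ∈ N, ρ n 0 ∈ translationSubgroup z N :=
    fun n hn => zpow_mem_of_stabZero_le hz hlt.le hn
  obtain ⟨a, ha⟩ := Int.subgroup_cyclic (translationSubgroup z N)
  have hdvd : ∀ t, t ∈ translationSubgroup z N ↔ (a.natAbs : ℤ) ∣ t := fun t => by
    rw [ha, ← AddSubgroup.zmultiples_eq_closure, Int.mem_zmultiples_iff, Int.natAbs_dvd]
  have ha0 : a.natAbs ≠ 0 := by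
    intro h0
    obtain ⟨g, hgN, hgS⟩ := SetLike.exists_of_lt hlt
    have := (hdvd _).mp (hmem g hgN)
    simp_all
  have ha1 : a.natAbs = 1 := by
    by_contra h1
    obtain ⟨v, hdv, hxv⟩ := hwit a.natAbs (by omega)
    have hxN : x ∈ N := hlt.le (mem_stabZero.mpr hx)
    have := hmem _ (N.mul_mem hxN ((hdvd v).mpr hdv))
    rw [map_mul, Perm.mul_apply, apply_zpow_of_eq_addRight hz, zero_add, hdvd] at this
    exact hxv this
  rw [eq_top_iff]
  intro g _
  have hzg : z ^ ρ g 0 ∈ N := (hdvd _).mpr (by simp [ha1])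
  simpa using N.mul_mem hzg (hlt.le (zpow_neg_mul_mem_stabZero hz g))

lemma eq_of_stabZero_eq {ρ' : G →* Perm ℤ} (hz' : ρ' z = Equiv.addRight 1)
    (h : stabZero ρ = stabZero ρ') : ρ = ρ' := by
  ext g n
  have hw : z ^ (-ρ g n) * g * z ^ n ∈ stabZero ρ := by
    simp only [mem_stabZero, map_mul, Perm.mul_apply, apply_zpow_of_eq_addRight hz, zero_add,
      add_neg_cancel]
  rw [h] at hw
  simp only [mem_stabZero, map_mul, Perm.mul_apply, apply_zpow_of_eq_addRight hz', zero_add] at hw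
  omega

end TranslationActions

section TriangleLift

variable {H : Type*} [Group H] {p q : ℕ} {x y : H}

def triangleLift (hx : x ^ p = 1) (hy : y ^ q = 1) : Tri p q →* H :=
  PresentedGroup.toGroup (f := ![x, y]) (by
    simp only [triangleRels, Set.mem_insert_iff, Set.mem_singleton_iff]
    rintro r (rfl | rfl) <;> simpa)

variable (hx : x ^ p = 1) (hy : y ^ q = 1)

@[simp] lemma triangleLift_triX : triangleLift hx hy (triX p q) = x :=
  PresentedGroup.toGroup.of _

@[simp] lemma triangleLift_triY : triangleLift hx hy (triY p q) = y :=
  PresentedGroup.toGroup.of _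

@[simp] lemma triangleLift_triZ : triangleLift hx hy (triZ p q) = (x * y)⁻¹ := by
  simp [triZ]

end TriangleLift

section PairSwap

open scoped Classical

variable {α β : Type*} {f g : α → β} (hfg : Injective (Sum.elim f g))

noncomputable def pairSwap : Equiv.Perm β :=
  Equiv.Perm.extendDomain (Equiv.sumComm α α) (Equiv.ofInjective _ hfg)

lemma pairSwap_apply_left (a : α) : pairSwap hfg (f a) = g a :=
  Equiv.Perm.extendDomain_apply_image _ _ (Sum.inl a)

lemma pairSwap_apply_right (a : α) : pairSwap hfg (g a) = f a :=
  Equiv.Perm.extendDomain_apply_image _ _ (Sum.inr a)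

lemma pairSwap_apply_of_notMem {b : β} (hf : b ∉ Set.range f) (hg : b ∉ Set.range g) :
    pairSwap hfg b = b := by
  refine Equiv.Perm.extendDomain_apply_not_subtype _ _ ?_
  rintro ⟨a | a, rfl⟩
  exacts [hf ⟨a, rfl⟩, hg ⟨a, rfl⟩]

lemma pairSwap_sq : pairSwap hfg ^ 2 = 1 := by
  rw [pairSwap, sq, Equiv.Perm.extendDomain_mul]
  have : Equiv.sumComm α α * Equiv.sumComm α α = 1 := by ext (a | a) <;> rfl
  rw [this, Equiv.Perm.extendDomain_one]

end PairSwap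

/-- Data for a permutation of `ℤ` of order dividing `p`: its `k`-th nontrivial cycle occupies
`len k` new points to the left of the previous cycles and `p - len k` new points to the right. -/
@[ext]
structure StepSeq (p : ℕ) where
  len : ℕ → ℕ
  len_pos : ∀ k, 0 < len k
  len_lt : ∀ k, len k < p

namespace StepSeq

open Equiv Finset

variable {p : ℕ} (s : StepSeq p)

/-- `[s.left k, s.right k)` is the interval covered by `{0}` and the first `k` nontrivial cycles
of `s.rot`. -/
def left (k : ℕ) : ℤ := -∑ i ∈ range k, (s.len i : ℤ)

def right (k : ℕ) : ℤ := 1 + ∑ i ∈ range k, ((p : ℤ) - s.len i)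

@[simp] lemma left_zero : s.left 0 = 0 := by simp [left]

@[simp] lemma right_zero : s.right 0 = 1 := by simp [right]

lemma left_succ (k : ℕ) : s.left (k + 1) = s.left k - s.len k := by
  simp [left, sum_range_succ]; ring

lemma right_succ (k : ℕ) : s.right (k + 1) = s.right k + (p - s.len k) := by
  simp [right, sum_range_succ]; ring

lemma left_succ_lt (k : ℕ) : s.left (k + 1) < s.left k := by
  have := s.len_pos k
  rw [left_succ]; omega

lemma right_lt_succ (k : ℕ) : s.right k < s.right (k + 1) := by
  have := s.len_lt k
  rw [right_succ]; omega

lemma left_strictAnti : StrictAnti s.left := strictAnti_nat_of_succ_lt s.left_succ_lt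

lemma right_strictMono : StrictMono s.right := strictMono_nat_of_lt_succ s.right_lt_succ

lemma left_le (k : ℕ) : s.left k ≤ -k := by
  induction k with
  | zero => simp
  | succ k ih => have := s.left_succ_lt k; push_cast; omega

lemma le_right (k : ℕ) : k + 1 ≤ s.right k := by
  induction k with
  | zero => simp
  | succ k ih => have := s.right_lt_succ k; push_cast; omega

lemma injective_sumElim_left_right : Injective (Sum.elim s.left s.right) :=
  s.left_strictAnti.injective.sumElim s.right_strictMono.injective fun i j => by
    have := s.left_le i; have := s.le_right j; omega

noncomputable def swap : Perm ℤ := pairSwap s.injective_sumElim_left_right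

/-- The cycles are `{0}` and, for each `k`, the `p` points
`[s.left (k+1), s.left k) ∪ [s.right k, s.right (k+1))`. -/
noncomputable def rot : Perm ℤ := (Equiv.addRight 1)⁻¹ * s.swap

lemma rot_apply (n : ℤ) : s.rot n = s.swap n - 1 := by
  simp [rot, Perm.inv_def, sub_eq_add_neg]

lemma swap_sq : s.swap ^ 2 = 1 := pairSwap_sq _

lemma rot_mul_swap : s.rot * s.swap = (Equiv.addRight 1)⁻¹ := by
  rw [rot, mul_assoc, ← sq, swap_sq, mul_one]

lemma swap_left (k : ℕ) : s.swap (s.left k) = s.right k := pairSwap_apply_left _ k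

lemma swap_right (k : ℕ) : s.swap (s.right k) = s.left k := pairSwap_apply_right _ k

lemma swap_of_mem_Ioo_left {k : ℕ} {n : ℤ} (h₁ : s.left (k + 1) < n) (h₂ : n < s.left k) :
    s.swap n = n := by
  refine pairSwap_apply_of_notMem _ (s.left_strictAnti.notMem_range_of_lt_of_lt h₁ h₂) ?_
  rintro ⟨j, rfl⟩
  have := s.left_le k; have := s.le_right j; omega

lemma swap_of_mem_Ioo_right {k : ℕ} {n : ℤ} (h₁ : s.right k < n) (h₂ : n < s.right (k + 1)) :
    s.swap n = n := by
  refine pairSwap_apply_of_notMem _ ?_ (s.right_strictMono.notMem_range_of_lt_of_lt h₁ h₂)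
  rintro ⟨j, rfl⟩
  have := s.left_le j; have := s.le_right k; omega

lemma rot_left (k : ℕ) : s.rot (s.left k) = s.right k - 1 := by rw [rot_apply, swap_left]

lemma rot_right (k : ℕ) : s.rot (s.right k) = s.left k - 1 := by rw [rot_apply, swap_right]

lemma rot_zero : s.rot 0 = 0 := by simpa using s.rot_left 0

lemma rot_of_mem_Ioo_left {k : ℕ} {n : ℤ} (h₁ : s.left (k + 1) < n) (h₂ : n < s.left k) :
    s.rot n = n - 1 := by rw [rot_apply, s.swap_of_mem_Ioo_left h₁ h₂]

lemma rot_of_mem_Ioo_right {k : ℕ} {n : ℤ} (h₁ : s.right k < n) (h₂ : n < s.right (k + 1)) :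
    s.rot n = n - 1 := by rw [rot_apply, s.swap_of_mem_Ioo_right h₁ h₂]

lemma rot_pow_succ_apply (m : ℕ) (n : ℤ) : (s.rot ^ (m + 1)) n = s.rot ((s.rot ^ m) n) := by
  rw [pow_succ', Perm.mul_apply]

lemma rot_pow_apply_left_succ_of_lt {k i : ℕ} (hi : i < p - s.len k) :
    (s.rot ^ (i + 1)) (s.left (k + 1)) = s.right (k + 1) - 1 - i := by
  induction i with
  | zero => simp [rot_left]
  | succ i ih =>
    have := s.right_succ k
    rw [rot_pow_succ_apply, ih (by omega), s.rot_of_mem_Ioo_right (k := k) (by omega) (by omega)]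
    push_cast; ring

lemma rot_pow_apply_left_succ_of_lt_len {k i : ℕ} (hi : i < s.len k) :
    (s.rot ^ (p - s.len k + 1 + i)) (s.left (k + 1)) = s.left k - 1 - i := by
  have hlen := s.len_lt k
  have hright := s.right_succ k
  induction i with
  | zero =>
    have hexit : s.right (k + 1) - 1 - ((p - s.len k - 1 : ℕ) : ℤ) = s.right k := by omega
    rw [show p - s.len k + 1 + 0 = p - s.len k - 1 + 1 + 1 by omega, rot_pow_succ_apply,
      s.rot_pow_apply_left_succ_of_lt (by omega), hexit, rot_right, Nat.cast_zero, sub_zero]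
  | succ i ih =>
    have := s.left_succ k
    rw [← add_assoc, rot_pow_succ_apply, ih (by omega),
      s.rot_of_mem_Ioo_left (k := k) (by omega) (by omega)]
    push_cast; ring

lemma rot_pow_apply_left_succ (k : ℕ) : (s.rot ^ p) (s.left (k + 1)) = s.left (k + 1) := by
  have := s.len_pos k
  have h := s.rot_pow_apply_left_succ_of_lt_len (k := k) (i := s.len k - 1) (by omega)
  rw [show p - s.len k + 1 + (s.len k - 1) = p by have := s.len_lt k; omega] at h
  rw [h, s.left_succ]
  omega

lemma exists_rot_pow_apply_left_succ_eq {n : ℤ} (hn : n ≠ 0) :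
    ∃ k m, (s.rot ^ m) (s.left (k + 1)) = n := by
  rcases hn.lt_or_gt with hn | hn
  · obtain ⟨k, hk₁, hk₂⟩ := Nat.exists_le_and_lt_succ_of_le (f := fun k => -s.left k)
      (x := -n - 1) (by simp; omega) ⟨(-n).toNat, by have := s.left_le (-n).toNat; omega⟩
    have := s.left_succ k
    exact ⟨k, _, (s.rot_pow_apply_left_succ_of_lt_len (i := (s.left k - 1 - n).toNat)
      (by omega)).trans (by omega)⟩
  · obtain ⟨k, hk₁, hk₂⟩ := Nat.exists_le_and_lt_succ_of_le (f := s.right) (x := n)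
      (by simp; omega) ⟨n.toNat, by have := s.le_right n.toNat; omega⟩
    have := s.right_succ k
    exact ⟨k, _, (s.rot_pow_apply_left_succ_of_lt (i := (s.right (k + 1) - 1 - n).toNat)
      (by omega)).trans (by omega)⟩

lemma rot_pow : s.rot ^ p = 1 := by
  ext n
  rw [Perm.one_apply]
  rcases eq_or_ne n 0 with rfl | hn
  · exact Perm.pow_apply_eq_self_of_apply_eq_self s.rot_zero p
  · obtain ⟨k, m, rfl⟩ := s.exists_rot_pow_apply_left_succ_eq hn
    rw [← Perm.mul_apply, ← pow_add, add_comm, pow_add, Perm.mul_apply,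
      rot_pow_apply_left_succ]

lemma right_eq_of_len_eq_one {k₀ k₁ : ℕ} (hrun : ∀ k, k₀ ≤ k → k < k₁ → s.len k = 1) {k : ℕ}
    (hk₀ : k₀ ≤ k) (hk₁ : k ≤ k₁) : s.right k = s.right k₀ + (p - 1) * (k - k₀ : ℕ) := by
  induction k, hk₀ using Nat.le_induction with
  | base => simp
  | succ k hk ih =>
    rw [s.right_succ, ih (by omega), hrun k hk (by omega), show k + 1 - k₀ = k - k₀ + 1 by omega]
    push_cast; ring

lemma swap_eq_self_of_run {k₀ k₁ : ℕ} (hrun : ∀ k, k₀ ≤ k → k < k₁ → s.len k = 1) {v : ℤ}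
    (hv₀ : s.right k₀ < v) (hv₁ : v < s.right k₁) (hv : ¬ v ≡ s.right k₀ [ZMOD (p - 1)]) :
    s.swap v = v := by
  refine pairSwap_apply_of_notMem _ ?_ ?_ <;> rintro ⟨j, rfl⟩
  · have := s.left_le j; have := s.le_right k₀; omega
  · have hj₀ : k₀ ≤ j := le_of_not_gt fun hj => (s.right_strictMono hj).not_gt hv₀
    have hj₁ : j ≤ k₁ := le_of_not_gt fun hj => (s.right_strictMono hj).not_gt hv₁
    rw [s.right_eq_of_len_eq_one hrun hj₀ hj₁] at hv
    exact hv (Int.modEq_iff_dvd.mpr ⟨-(j - k₀ : ℕ), by ring⟩)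

lemma exists_dvd_swap_eq_self_of_run (hp : 3 ≤ p) {k₀ k₁ d : ℕ}
    (hrun : ∀ k, k₀ ≤ k → k < k₁ → s.len k = 1) (hd : 0 < d) (hlong : d < k₁ - k₀)
    (hmod : ¬ ((p - 1 : ℤ) ∣ d ∧ (p - 1 : ℤ) ∣ s.right k₀)) :
    ∃ v : ℤ, (d : ℤ) ∣ v ∧ s.swap v = v := by
  obtain ⟨v, hv₀, hv₁, hdv, hv⟩ :=
    Int.exists_dvd_not_modEq (s.right k₀) (s.right k₀) (by exact_mod_cast hd) hmod
  refine ⟨v, hdv, s.swap_eq_self_of_run hrun hv₀ ?_ hv⟩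
  have hgap : (2 : ℤ) * (d + 1) ≤ (p - 1) * (k₁ - k₀ : ℕ) := by
    have : (d : ℤ) + 1 ≤ (k₁ - k₀ : ℕ) := by omega
    have : (2 : ℤ) ≤ p - 1 := by omega
    nlinarith
  rw [s.right_eq_of_len_eq_one hrun (by omega) le_rfl]
  omega

/-- One of two long runs separated by a cycle with `len = p - 1` starts at a right end not
divisible by `p - 1`, which is what `Int.exists_dvd_not_modEq` needs when `p - 1 ∣ d`. -/
lemma exists_dvd_swap_eq_self (hp : 3 ≤ p) {k₀ k₁ k₂ d : ℕ} (hd : 0 < d)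
    (hrun₀ : ∀ k, k₀ ≤ k → k < k₁ → s.len k = 1) (hlen : s.len k₁ = p - 1)
    (hrun₁ : ∀ k, k₁ + 1 ≤ k → k < k₂ → s.len k = 1)
    (hlong₀ : d < k₁ - k₀) (hlong₁ : d < k₂ - (k₁ + 1)) :
    ∃ v : ℤ, (d : ℤ) ∣ v ∧ s.swap v = v := by
  by_cases h : (p - 1 : ℤ) ∣ s.right k₀
  · refine s.exists_dvd_swap_eq_self_of_run hp hrun₁ hd hlong₁ fun ⟨_, h'⟩ => ?_
    have hright : s.right (k₁ + 1) = s.right k₀ + (p - 1) * (k₁ - k₀ : ℕ) + 1 := by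
      rw [s.right_succ, s.right_eq_of_len_eq_one hrun₀ (by omega) le_rfl, hlen]
      push_cast [Nat.cast_sub (by omega : 1 ≤ p)]
      ring
    have h1 : (p - 1 : ℤ) ∣ 1 := by
      have := dvd_sub (dvd_sub h' h) (dvd_mul_right (p - 1 : ℤ) (k₁ - k₀ : ℕ))
      rwa [hright, show ∀ a b : ℤ, a + b + 1 - a - b = 1 by intros; ring] at this
    have := Int.le_of_dvd one_pos h1
    omega
  · exact s.exists_dvd_swap_eq_self_of_run hp hrun₀ hd hlong₀ fun h' => h h'.2

lemma left_eq_of_len_eq {t : StepSeq p} {k : ℕ} (h : ∀ i < k, s.len i = t.len i) :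
    s.left k = t.left k := by
  simp only [left]
  rw [Finset.sum_congr rfl fun i hi => by rw [h i (Finset.mem_range.mp hi)]]

lemma swap_ne_of_len_lt {t : StepSeq p} {k : ℕ} (hagree : ∀ i < k, s.len i = t.len i)
    (hlt : s.len k < t.len k) : s.swap ≠ t.swap := by
  intro h
  have hleft := s.left_eq_of_len_eq hagree
  have := s.left_succ k
  have := t.left_succ k
  have := s.len_pos k
  have hs := s.swap_left (k + 1)
  rw [h, t.swap_of_mem_Ioo_left (k := k) (by omega) (by omega)] at hs
  have := s.left_le (k + 1)
  have := s.le_right (k + 1)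
  omega

lemma swap_injective : Injective (swap : StepSeq p → Perm ℤ) := by
  intro s t h
  by_contra hne
  have hex : ∃ k, s.len k ≠ t.len k := by
    by_contra! h'
    exact hne (StepSeq.ext (funext h'))
  classical
  have hagree : ∀ i < Nat.find hex, s.len i = t.len i :=
    fun i hi => not_not.mp (Nat.find_min hex hi)
  rcases (Nat.find_spec hex).lt_or_gt with hlt | hlt
  · exact s.swap_ne_of_len_lt hagree hlt h
  · exact t.swap_ne_of_len_lt (fun i hi => (hagree i hi).symm) hlt h.symm

noncomputable def rep : Tri p 2 →* Perm ℤ := triangleLift s.rot_pow s.swap_sq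

lemma rep_triX : s.rep (triX p 2) = s.rot := triangleLift_triX _ _

lemma rep_triY : s.rep (triY p 2) = s.swap := triangleLift_triY _ _

lemma rep_triZ : s.rep (triZ p 2) = Equiv.addRight 1 := by
  rw [rep, triangleLift_triZ, rot_mul_swap, inv_inv]

lemma nonparabolic_stabZero_rep : Nonparabolic (stabZero s.rep) := by
  rintro _ hg ⟨k, c, hk, rfl⟩
  exact conj_zpow_notMem_stabZero s.rep_triZ hk c hg

lemma stabZero_rep_injective : Injective fun s : StepSeq p => stabZero s.rep := by
  intro s t h
  have := eq_of_stabZero_eq s.rep_triZ t.rep_triZ h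
  exact swap_injective (by rw [← rep_triY, this, rep_triY])

noncomputable def marks (S : Set ℕ) (i : ℕ) : ℕ := 4 ^ (i + 1) + S.indicator 1 i

lemma le_marks (S : Set ℕ) (i : ℕ) : 4 ^ (i + 1) ≤ marks S i := Nat.le_add_right _ _

lemma marks_le (S : Set ℕ) (i : ℕ) : marks S i ≤ 4 ^ (i + 1) + 1 := by
  by_cases h : i ∈ S <;> simp [marks, h]

lemma marks_add_le (S : Set ℕ) (i : ℕ) : marks S i + i + 2 ≤ marks S (i + 1) := by
  have := marks_le S i
  have := pow_succ 4 (i + 1) ▸ le_marks S (i + 1)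
  have := Nat.lt_pow_self (n := i + 1) (by norm_num : 1 < 4)
  omega

lemma marks_strictMono (S : Set ℕ) : StrictMono (marks S) :=
  strictMono_nat_of_lt_succ fun i => by have := marks_add_le S i; omega

lemma marks_eq_four_pow_add_one {S : Set ℕ} {i j : ℕ} (h : marks S j = 4 ^ (i + 1) + 1) :
    j = i ∧ i ∈ S := by
  have hji : j = i := by
    have := le_marks S i
    have := marks_le S i
    rcases lt_trichotomy j i with hji | hji | hji
    · have := marks_add_le S j
      have := (marks_strictMono S).monotone (show j + 1 ≤ i by omega)
      omega
    · exact hji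
    · have := marks_add_le S i
      have := (marks_strictMono S).monotone (show i + 1 ≤ j by omega)
      omega
  refine ⟨hji, ?_⟩
  subst hji
  by_contra hj
  simp [marks, hj] at h

lemma range_marks_injective : Injective fun S => Set.range (marks S) := by
  suffices ∀ S T : Set ℕ, Set.range (marks S) = Set.range (marks T) → S ⊆ T from
    fun S T h => (this S T h).antisymm (this T S h.symm)
  intro S T h i hi
  obtain ⟨j, hj⟩ : 4 ^ (i + 1) + 1 ∈ Set.range (marks T) := h ▸ ⟨i, by simp [marks, hi]⟩
  exact (marks_eq_four_pow_add_one hj).2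

open Classical in
noncomputable def marked {p : ℕ} (hp : 2 ≤ p) (S : Set ℕ) : StepSeq p where
  len k := if k ∈ Set.range (marks S) then p - 1 else 1
  len_pos k := by split_ifs <;> omega
  len_lt k := by split_ifs <;> omega

variable {p : ℕ} (hp : 2 ≤ p) (S : Set ℕ)

lemma marked_len_marks (i : ℕ) : (marked hp S).len (marks S i) = p - 1 :=
  if_pos ⟨i, rfl⟩

lemma marked_len_of_lt_of_lt {i k : ℕ} (h₁ : marks S i < k) (h₂ : k < marks S (i + 1)) :
    (marked hp S).len k = 1 :=
  if_neg ((marks_strictMono S).notMem_range_of_lt_of_lt h₁ h₂)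

lemma marked_len_eq_sub_one_iff (hp₃ : 3 ≤ p) {k : ℕ} :
    (marked hp S).len k = p - 1 ↔ k ∈ Set.range (marks S) := by
  simp only [marked]
  split_ifs with hk
  · simp [hk]
  · simp only [hk, iff_false]
    omega

lemma marked_injective (hp₃ : 3 ≤ p) : Injective (marked hp) := by
  intro S T h
  apply range_marks_injective
  ext k
  rw [← marked_len_eq_sub_one_iff hp S hp₃, ← marked_len_eq_sub_one_iff hp T hp₃, h]

/-- Between the marks `d`, `d + 1`, `d + 2` lie two runs longer than `d`. -/
lemma exists_dvd_marked_swap_eq_self (hp₃ : 3 ≤ p) {d : ℕ} (hd : 0 < d) :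
    ∃ v : ℤ, (d : ℤ) ∣ v ∧ (marked hp S).swap v = v := by
  have h₀ := marks_add_le S d
  have h₁ := marks_add_le S (d + 1)
  exact exists_dvd_swap_eq_self _ hp₃ hd (k₀ := marks S d + 1) (k₁ := marks S (d + 1))
    (k₂ := marks S (d + 1 + 1))
    (fun k hk₀ hk₁ => marked_len_of_lt_of_lt hp S (i := d) (by omega) hk₁)
    (marked_len_marks hp S (d + 1))
    (fun k hk₀ hk₁ => marked_len_of_lt_of_lt hp S (i := d + 1) (by omega) hk₁) (by omega) (by omega)

lemma isCoatom_stabZero_marked_rep (hp₃ : 3 ≤ p) : IsCoatom (stabZero (marked hp S).rep) := by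
  refine isCoatom_stabZero (marked hp S).rep_triZ (x := triX p 2) ?_ fun d hd => ?_
  · rw [rep_triX, rot_zero]
  · obtain ⟨v, hdv, hv⟩ := exists_dvd_marked_swap_eq_self hp S hp₃ (d := d) (by omega)
    refine ⟨v, hdv, fun hdv' => ?_⟩
    rw [rep_triX, rot_apply, hv] at hdv'
    have := Int.le_of_dvd one_pos (by simpa using dvd_sub hdv hdv')
    omega

end StepSeq

instance : Uncountable (Set ℕ) :=
  ⟨fun _ => (exists_injective_nat (Set ℕ)).elim fun f hf => cantor_injective f hf⟩

instance (p q : ℕ) : Countable (Tri p q) := Quotient.countable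

/-- For each integer p ≥ 3, the Hecke group Δ(p,2,∞) ≅ C_p * C_2 has
uncountably many conjugacy classes of nonparabolic maximal subgroups. -/
theorem hecke_uncountably_many_nonparabolic_maximal (p : ℕ) (hp : 3 ≤ p) :
    Uncountable (Quot (conjRel (fun M : Subgroup (Tri p 2) =>
      Nonparabolic M ∧ IsCoatom M))) := by
  have hp₂ : 2 ≤ p := by omega
  exact uncountable_quot_conjRel (fun S : Set ℕ => stabZero (StepSeq.marked hp₂ S).rep)
    (StepSeq.stabZero_rep_injective.comp (StepSeq.marked_injective hp₂ hp))
    fun S => ⟨(StepSeq.marked hp₂ S).nonparabolic_stabZero_rep,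
      StepSeq.isCoatom_stabZero_marked_rep hp₂ S hp⟩
end

section
/- With the notation of the context, for any sequence h = (h_l)_{l≥1} with each h_l ∈ {0,1}, the Neumann subgroup M_h (the stabiliser of 0 in the associated action of the modular group Γ = ⟨X, Y | X³ = Y² = 1⟩ on ℤ) is a maximal subgroup of Γ if and only if h is not the constant sequence with h_l = 0 for all l. -/
/-!
Since `Z` acts as the translation `i ↦ i + 1`, a subgroup `N ≥ M_h` is determined by the additive
group `{k | Z^k ∈ N} = dℤ`: it consists of the `w` with `w • 0 ≡ 0 [ZMOD d]`. Thus `M_h` fails to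
be maximal exactly when `Γ`, i.e. `y`, permutes the residue classes modulo some `d ≥ 2`.

If `h = 0`, then `g l = 6l - 4` and `y i ≡ i [ZMOD 3]` for every `i`. Conversely let `h L = 1` and
let `y` preserve congruence modulo `d ≥ 2`; `d = 2` fails at `1 ≡ -1`. From the block
`-3l, -3l-1, -3l-2` one reads off `y (-3l-1) = y (-3l) + 2 - h l` and
`y (-3l-2) = g l + 5 - 5 h l`, so `h l` and `g l` modulo `d` only depend on `3l` modulo `d`.
* If `3 ∤ d`, pick `3t ≡ -1`. Then `u l = y (-3l) + 3l` satisfies `u l ≡ u l' + 3 - h l'` for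
  `l' ≡ l + t`; summing over `ZMod d`, the number of residues with `h = 1` is divisible by `d`, so
  `h = 1` everywhere, and then `u l = u l' = -1` gives `2 ≡ 0`.
* If `d = 3D`, `h` has period `D` and `g (D + 1) ≡ g 1`, which forces `3D/5` ones per period and
  `g (D + 1) = g 1 + d`. The `6D/5` fixed points `g l, g l + 2, g l + 4` of one period are then
  pairwise incongruent, while each block `-3m - {0, 1, 2}` contains at most one class fixed by `y`.
-/

def modEqSubgroup (d : ℕ) : Subgroup (Equiv.Perm ℤ) where
  carrier := {σ | ∀ i j : ℤ, (σ i : ZMod d) = σ j ↔ (i : ZMod d) = j}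
  one_mem' _ _ := Iff.rfl
  mul_mem' hσ hτ i j := (hσ _ _).trans (hτ i j)
  inv_mem' {σ} hσ i j := by simpa using (hσ (σ⁻¹ i) (σ⁻¹ j)).symm

lemma mem_modEqSubgroup_of_map_eq {d : ℕ} {σ : Equiv.Perm ℤ}
    (hσ : ∀ i j : ℤ, (i : ZMod d) = j → (σ i : ZMod d) = σ j)
    (hσinv : ∀ i j : ℤ, (i : ZMod d) = j → (σ⁻¹ i : ZMod d) = σ⁻¹ j) :
    σ ∈ modEqSubgroup d :=
  fun i j => ⟨fun hij => by simpa using hσinv _ _ hij, hσ i j⟩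

lemma mem_modEqSubgroup_of_modEq {d : ℕ} {σ : Equiv.Perm ℤ} (hσ : ∀ i, σ i ≡ i [ZMOD d]) :
    σ ∈ modEqSubgroup d := fun i j => by
  rw [ZMod.intCast_eq_intCast_iff, ZMod.intCast_eq_intCast_iff]
  exact ⟨fun hij => ((hσ i).symm.trans hij).trans (hσ j),
    fun hij => ((hσ i).trans hij).trans (hσ j).symm⟩

lemma addRight_mem_modEqSubgroup (d : ℕ) (k : ℤ) : Equiv.addRight k ∈ modEqSubgroup d :=
  fun i j => by simp

section Translation

open Subgroup MulAction Pointwise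

variable {G : Type*} [Group G] {φ : G →* Equiv.Perm ℤ} {ζ : G}

lemma apply_zpow_of_eq_addRight_s6 (hζ : φ ζ = Equiv.addRight 1) (k i : ℤ) :
    φ (ζ ^ k) i = i + k := by
  simp [hζ]

lemma mem_comap_stabilizer_zero {w : G} :
    w ∈ comap φ (stabilizer (Equiv.Perm ℤ) (0 : ℤ)) ↔ φ w 0 = 0 := Iff.rfl

lemma zpow_mul_mul_zpow_mem_comap_stabilizer (hζ : φ ζ = Equiv.addRight 1) (w : G) (i : ℤ) :
    ζ ^ (-φ w i) * w * ζ ^ i ∈ comap φ (stabilizer (Equiv.Perm ℤ) (0 : ℤ)) := by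
  simp [hζ]

lemma exists_mem_iff_of_comap_stabilizer_le (hζ : φ ζ = Equiv.addRight 1) {N : Subgroup G}
    (hN : comap φ (stabilizer (Equiv.Perm ℤ) (0 : ℤ)) ≤ N) :
    ∃ d : ℕ, ∀ n, n ∈ N ↔ (φ n 0 : ZMod d) = 0 := by
  let B : AddSubgroup ℤ :=
    { carrier := {k | ζ ^ k ∈ N}
      zero_mem' := by simp [N.one_mem]
      add_mem' := fun ha hb => by simpa [zpow_add] using N.mul_mem ha hb
      neg_mem' := fun ha => by simpa [zpow_neg] using N.inv_mem ha }
  obtain ⟨a, ha⟩ := Int.subgroup_cyclic B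
  refine ⟨a.natAbs, fun n => ?_⟩
  have hn : n ∈ N ↔ ζ ^ (φ n 0) ∈ N := by
    have hmem := hN (zpow_mul_mul_zpow_mem_comap_stabilizer hζ n 0)
    rw [zpow_zero, mul_one, zpow_neg] at hmem
    constructor
    · intro hnN; simpa using N.mul_mem hnN (N.inv_mem hmem)
    · intro hζN; simpa using N.mul_mem hζN hmem
  rw [hn, ZMod.intCast_zmod_eq_zero_iff_dvd, Int.natCast_natAbs, abs_dvd,
    ← Int.mem_zmultiples_iff, AddSubgroup.zmultiples_eq_closure, ← ha]
  rfl

lemma mem_modEqSubgroup_of_mem_iff (hζ : φ ζ = Equiv.addRight 1) {N : Subgroup G} {d : ℕ}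
    (hMN : comap φ (stabilizer (Equiv.Perm ℤ) (0 : ℤ)) ≤ N)
    (hN : ∀ n, n ∈ N ↔ (φ n 0 : ZMod d) = 0) (w : G) : φ w ∈ modEqSubgroup d := by
  have key : ∀ w : G, ∀ i j : ℤ, (i : ZMod d) = j → (φ w i : ZMod d) = φ w j := by
    intro w i j hij
    have hstep : ζ ^ (j - i) ∈ N := by
      rw [hN, apply_zpow_of_eq_addRight_s6 hζ]
      simp [hij]
    have hmem := N.mul_mem (hMN (zpow_mul_mul_zpow_mem_comap_stabilizer hζ w i)) hstep
    rw [hN] at hmem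
    simp only [map_mul, Equiv.Perm.mul_apply, apply_zpow_of_eq_addRight_s6 hζ, zero_add,
      sub_add_cancel] at hmem
    push_cast at hmem
    linear_combination -hmem
  exact mem_modEqSubgroup_of_map_eq (key w) (by simpa using key w⁻¹)

lemma not_isCoatom_of_forall_mem_modEqSubgroup (hζ : φ ζ = Equiv.addRight 1) {d : ℕ}
    (hd : 2 ≤ d) (hpres : ∀ w, φ w ∈ modEqSubgroup d) :
    ¬ IsCoatom (comap φ (stabilizer (Equiv.Perm ℤ) (0 : ℤ))) := by
  intro hco
  have : Fact (1 < d) := ⟨hd⟩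
  set N := comap φ (stabilizer (Equiv.Perm ℤ) {i : ℤ | (i : ZMod d) = 0})
  have memN : ∀ n, n ∈ N ↔ ∀ i : ℤ, (φ n i : ZMod d) = 0 ↔ (i : ZMod d) = 0 :=
    fun n => mem_stabilizer_set
  have hMN : comap φ (stabilizer (Equiv.Perm ℤ) (0 : ℤ)) ≤ N := fun w hw => (memN w).mpr
    fun i => by simpa [mem_comap_stabilizer_zero.mp hw] using hpres w i 0
  have hζd : ζ ^ (d : ℤ) ∈ N := (memN _).mpr fun i => by
    rw [apply_zpow_of_eq_addRight_s6 hζ]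
    simp
  have hζN : ζ ∉ N := fun hζN => by simpa [hζ] using (memN ζ).mp hζN 0
  refine hζN (hco.2 N (lt_of_le_of_ne hMN fun hMeqN => ?_) ▸ mem_top ζ)
  have := mem_comap_stabilizer_zero.mp (hMeqN ▸ hζd)
  rw [apply_zpow_of_eq_addRight_s6 hζ] at this
  omega

theorem isCoatom_comap_stabilizer_zero_iff (hζ : φ ζ = Equiv.addRight 1) :
    IsCoatom (comap φ (stabilizer (Equiv.Perm ℤ) (0 : ℤ))) ↔
      ∀ d : ℕ, 2 ≤ d → ∃ w, φ w ∉ modEqSubgroup d := by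
  refine ⟨fun hco d hd => ?_, fun hnot => ⟨fun htop => ?_, fun N hMN => ?_⟩⟩
  · by_contra! hpres
    exact not_isCoatom_of_forall_mem_modEqSubgroup hζ hd hpres hco
  · have := mem_comap_stabilizer_zero.mp (htop ▸ mem_top ζ)
    simp [hζ] at this
  · obtain ⟨d, hN⟩ := exists_mem_iff_of_comap_stabilizer_le hζ hMN.le
    rcases Nat.lt_or_ge d 2 with hd | hd
    · interval_cases d
      · exact absurd (fun n hn => mem_comap_stabilizer_zero.mpr (by simpa using (hN n).mp hn))
          (not_le_of_gt hMN)
      · exact eq_top_iff.mpr fun n _ => (hN n).mpr (Subsingleton.elim _ _)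
    · obtain ⟨w, hw⟩ := hnot d hd
      exact absurd (mem_modEqSubgroup_of_mem_iff hζ hMN.le hN w) hw

end Translation

lemma closure_triY_triZ (p q : ℕ) : Subgroup.closure {triY p q, triZ p q} = ⊤ := by
  rw [eq_top_iff, ← PresentedGroup.closure_range_of, Subgroup.closure_le]
  rintro _ ⟨i, rfl⟩
  fin_cases i
  · have hX : triX p q = (triZ p q)⁻¹ * (triY p q)⁻¹ := by simp [triZ]
    change triX p q ∈ _
    rw [hX]
    exact Subgroup.mul_mem _ (Subgroup.inv_mem _ (Subgroup.subset_closure (by simp)))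
      (Subgroup.inv_mem _ (Subgroup.subset_closure (by simp)))
  · exact Subgroup.subset_closure (by simp [triY])

lemma Fin.eq_of_natCast_zmod_eq {d : ℕ} (hd : 2 ≤ d) {a b : Fin 2}
    (hab : ((a : ℕ) : ZMod d) = (b : ℕ)) : a = b := by
  rw [ZMod.natCast_eq_natCast_iff', Nat.mod_eq_of_lt (by omega), Nat.mod_eq_of_lt (by omega)]
    at hab
  exact Fin.ext hab

lemma Fin.eq_zero_or_eq_one_of_two (a : Fin 2) : a = 0 ∨ a = 1 := by
  fin_cases a <;> simp

lemma Fin.natCast_val_eq_ite {R : Type*} [AddMonoidWithOne R] (a : Fin 2) :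
    ((a : ℕ) : R) = if a = 1 then 1 else 0 := by
  fin_cases a <;> simp

lemma Finset.sum_natCast_val_add_card_filter_eq_zero {ι : Type*} (s : Finset ι) (f : ι → Fin 2) :
    ∑ i ∈ s, ((f i : ℕ) : ℤ) + (s.filter fun i => f i = 0).card = s.card := by
  have hzero : (s.filter fun i => f i = 0) = s.filter fun i => ¬ f i = 1 :=
    Finset.filter_congr fun i _ => by rcases (f i).eq_zero_or_eq_one_of_two with e | e <;> simp [e]
  simp only [Fin.natCast_val_eq_ite, Finset.sum_boole, hzero]
  exact_mod_cast Finset.card_filter_add_card_filter_not _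

lemma Fintype.sum_eq_zero_of_eq_add_shift {A M : Type*} [AddGroup A] [Fintype A]
    [AddCommGroup M] (u v : A → M) (t : A) (huv : ∀ c, u c = u (c + t) + v (c + t)) :
    ∑ c, v c = 0 := by
  have hshift : ∀ f : A → M, ∑ c, f (c + t) = ∑ c, f c :=
    fun f => Fintype.sum_equiv (Equiv.addRight t) _ _ fun _ => rfl
  have hsum := Finset.sum_congr rfl fun c (_ : c ∈ Finset.univ) => huv c
  rwa [Finset.sum_add_distrib, hshift u, hshift v, left_eq_add] at hsum

lemma Fin.forall_eq_one_of_sum_natCast_eq_zero {α : Type*} [Fintype α] {f : α → Fin 2}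
    (hf : ∃ a, f a = 1) (hsum : ∑ a, ((f a : ℕ) : ZMod (Fintype.card α)) = 0) (a : α) :
    f a = 1 := by
  obtain ⟨b, hb⟩ := hf
  simp only [Fin.natCast_val_eq_ite, Finset.sum_boole, ZMod.natCast_eq_zero_iff] at hsum
  have hall := Finset.eq_univ_of_card _ <| le_antisymm (Finset.card_le_univ _)
    (Nat.le_of_dvd (Finset.card_pos.mpr ⟨b, by simp [hb]⟩) hsum)
  exact Finset.filter_eq_self.mp hall a (Finset.mem_univ a)

lemma exists_mem_Icc_eq_of_add_period {α : Type*} {f : ℕ → α} {D : ℕ} (hD : 1 ≤ D)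
    (hf : ∀ l, 1 ≤ l → f (l + D) = f l) {L : ℕ} (hL : 1 ≤ L) :
    ∃ l ∈ Finset.Icc 1 D, f l = f L := by
  induction L using Nat.strong_induction_on with
  | _ L ih =>
    by_cases hLD : L ≤ D
    · exact ⟨L, Finset.mem_Icc.mpr ⟨hL, hLD⟩, rfl⟩
    · obtain ⟨l, hl, hfl⟩ := ih (L - D) (by omega) (by omega)
      refine ⟨l, hl, hfl.trans ?_⟩
      rw [← hf _ (by omega), Nat.sub_add_cancel (by omega)]

lemma exists_cast_eq_neg_three_mul_sub {D : ℕ} (hD : 1 ≤ D) (a : ℤ) :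
    ∃ m : ℕ, 1 ≤ m ∧ ∃ j : ℕ, j < 3 ∧ (a : ZMod (3 * D)) = ((-3 * m - j : ℤ) : ZMod (3 * D)) := by
  obtain ⟨s, j, hj, hj3, rfl⟩ : ∃ s j : ℤ, 0 ≤ j ∧ j < 3 ∧ a = 3 * s - j :=
    ⟨(a + (-a) % 3) / 3, (-a) % 3, by omega, by omega, by omega⟩
  have hdiv := Int.emod_add_mul_ediv (-s) D
  have hnonneg := Int.emod_nonneg (-s) (by omega : (D : ℤ) ≠ 0)
  refine ⟨((-s) % D + D).toNat, by omega, j.toNat, by omega, ?_⟩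
  rw [ZMod.intCast_eq_intCast_iff_dvd_sub]
  refine ⟨(-s) / D - 1, ?_⟩
  push_cast
  rw [Int.toNat_of_nonneg (by omega), Int.toNat_of_nonneg (by omega)]
  linear_combination (-3 : ℤ) * hdiv

lemma three_mul_natCast_add_eq (D l : ℕ) : (3 * (l + D : ℕ) : ZMod (3 * D)) = 3 * (l : ℕ) := by
  have : ((3 * D : ℕ) : ZMod (3 * D)) = 0 := ZMod.natCast_self _
  push_cast at this ⊢
  linear_combination this

structure NeumannRules (h : ℕ → Fin 2) (g : ℕ → ℤ) (y : ℤ → ℤ) : Prop where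
  g_eq : ∀ l : ℕ, 1 ≤ l →
    g l = 6 * (l : ℤ) - 5 * (∑ i ∈ Finset.Icc 1 (l - 1), ((h i : ℕ) : ℤ)) - 4
  y_zero : y 0 = 0
  y_neg_one : y (-1) = -1
  y_one : y 1 = -2
  y_neg_two : y (-2) = 1
  of_eq_zero : ∀ l : ℕ, 1 ≤ l → h l = 0 →
    y (g l) = g l ∧ y (g l + 2) = g l + 2 ∧ y (g l + 4) = g l + 4 ∧
    y (g l + 1) = -3 * (l : ℤ) ∧ y (-3 * (l : ℤ)) = g l + 1 ∧
    y (g l + 3) = -3 * (l : ℤ) - 1 ∧ y (-3 * (l : ℤ) - 1) = g l + 3 ∧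
    y (g l + 5) = -3 * (l : ℤ) - 2 ∧ y (-3 * (l : ℤ) - 2) = g l + 5
  of_eq_one : ∀ l : ℕ, 1 ≤ l → h l = 1 →
    y (-3 * (l : ℤ)) = -3 * (l : ℤ) - 1 ∧ y (-3 * (l : ℤ) - 1) = -3 * (l : ℤ) ∧
    y (g l) = -3 * (l : ℤ) - 2 ∧ y (-3 * (l : ℤ) - 2) = g l

namespace NeumannRules

variable {h : ℕ → Fin 2} {g : ℕ → ℤ} {y : ℤ → ℤ} {l l' d D : ℕ}

lemma g_one (R : NeumannRules h g y) : g 1 = 2 := by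
  simp [R.g_eq 1 le_rfl]

lemma g_succ (R : NeumannRules h g y) (hl : 1 ≤ l) :
    g (l + 1) = g l + 6 - 5 * ((h l : ℕ) : ℤ) := by
  obtain ⟨k, rfl⟩ : ∃ k, l = k + 1 := ⟨l - 1, by omega⟩
  rw [R.g_eq _ (by omega), R.g_eq _ hl, Nat.add_sub_cancel, Nat.add_sub_cancel,
    Finset.sum_Icc_succ_top (by omega)]
  push_cast
  ring

lemma g_mono (R : NeumannRules h g y) {l' : ℕ} (hl : 1 ≤ l) (hll' : l ≤ l') : g l ≤ g l' := by
  induction l', hll' using Nat.le_induction with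
  | base => rfl
  | succ m hlm ih =>
    have := R.g_succ (hl.trans hlm)
    have := (h m).isLt
    omega

lemma y_neg_three_mul_sub_one (R : NeumannRules h g y) (hl : 1 ≤ l) :
    y (-3 * l - 1) = y (-3 * l) + 2 - ((h l : ℕ) : ℤ) := by
  rcases (h l).eq_zero_or_eq_one_of_two with h0 | h1
  · obtain ⟨-, -, -, -, e0, -, e1, -⟩ := R.of_eq_zero l hl h0
    rw [e0, e1, h0, Fin.val_zero, Nat.cast_zero]
    ring
  · obtain ⟨e0, e1, -⟩ := R.of_eq_one l hl h1
    rw [e0, e1, h1, Fin.val_one, Nat.cast_one]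
    ring

lemma y_neg_three_mul_sub_two (R : NeumannRules h g y) (hl : 1 ≤ l) :
    y (-3 * l - 2) = g l + 5 - 5 * ((h l : ℕ) : ℤ) := by
  rcases (h l).eq_zero_or_eq_one_of_two with h0 | h1
  · obtain ⟨-, -, -, -, -, -, -, -, e2⟩ := R.of_eq_zero l hl h0
    rw [e2, h0]
    simp
  · rw [(R.of_eq_one l hl h1).2.2.2, h1]
    simp

lemma y_neg_three_mul_sub_of_eq_zero (R : NeumannRules h g y) (hl : 1 ≤ l) (h0 : h l = 0)
    {j : ℕ} (hj : j < 3) : y (-3 * l - j) = g l + 1 + 2 * j := by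
  obtain ⟨-, -, -, -, e0, -, e1, -, e2⟩ := R.of_eq_zero l hl h0
  interval_cases j
  · simpa using e0
  · simpa [add_assoc] using e1
  · simpa [add_assoc] using e2

lemma cast_y_eq_of_three_mul_eq
    (hy : ∀ i j : ℤ, (i : ZMod d) = j → (y i : ZMod d) = y j)
    (h3 : (3 * l : ZMod d) = 3 * l') (j : ℤ) :
    (y (-3 * l - j) : ZMod d) = y (-3 * l' - j) :=
  hy _ _ (by push_cast; linear_combination -h3)

lemma h_eq_of_three_mul_eq (R : NeumannRules h g y) (hd : 2 ≤ d)
    (hy : ∀ i j : ℤ, (i : ZMod d) = j → (y i : ZMod d) = y j)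
    (hl : 1 ≤ l) (hl' : 1 ≤ l') (h3 : (3 * l : ZMod d) = 3 * l') : h l = h l' := by
  have e0 := cast_y_eq_of_three_mul_eq hy h3 0
  have e1 := cast_y_eq_of_three_mul_eq hy h3 1
  rw [sub_zero, sub_zero] at e0
  rw [R.y_neg_three_mul_sub_one hl, R.y_neg_three_mul_sub_one hl'] at e1
  apply Fin.eq_of_natCast_zmod_eq hd
  push_cast at e0 e1
  linear_combination e0 - e1

lemma g_cast_eq_of_three_mul_eq (R : NeumannRules h g y) (hd : 2 ≤ d)
    (hy : ∀ i j : ℤ, (i : ZMod d) = j → (y i : ZMod d) = y j)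
    (hl : 1 ≤ l) (hl' : 1 ≤ l') (h3 : (3 * l : ZMod d) = 3 * l') : (g l : ZMod d) = g l' := by
  have e2 := cast_y_eq_of_three_mul_eq hy h3 2
  rw [R.y_neg_three_mul_sub_two hl, R.y_neg_three_mul_sub_two hl',
    R.h_eq_of_three_mul_eq hd hy hl hl' h3] at e2
  push_cast at e2
  linear_combination e2

lemma false_of_two (R : NeumannRules h g y)
    (hy : ∀ i j : ℤ, (i : ZMod 2) = j → (y i : ZMod 2) = y j) : False := by
  have := hy 1 (-1) (by decide)
  rw [R.y_one, R.y_neg_one] at this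
  exact absurd this (by decide)

lemma cast_y_neg_three_mul_add_eq (R : NeumannRules h g y)
    (hy : ∀ i j : ℤ, (i : ZMod d) = j → (y i : ZMod d) = y j)
    (hl' : 1 ≤ l') (h3 : (3 * l' + 1 : ZMod d) = 3 * l) :
    ((y (-3 * l) + 3 * l : ℤ) : ZMod d) =
      ((y (-3 * l') + 3 * l' : ℤ) : ZMod d) + 3 - ((h l' : ℕ) : ZMod d) := by
  have e := hy (-3 * l) (-3 * l' - 1) (by push_cast; linear_combination h3)
  rw [R.y_neg_three_mul_sub_one hl'] at e
  push_cast at e ⊢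
  linear_combination e - h3

lemma false_of_not_three_dvd (R : NeumannRules h g y) (hd : 3 ≤ d) (h3 : ¬ 3 ∣ d)
    (hy : ∀ i j : ℤ, (i : ZMod d) = j → (y i : ZMod d) = y j)
    {L : ℕ} (hL : 1 ≤ L) (hL1 : h L = 1) : False := by
  have : NeZero d := ⟨by omega⟩
  set t : ZMod d := -(3 : ZMod d)⁻¹
  have ht : 3 * t + 1 = 0 := by
    have := ZMod.coe_mul_inv_eq_one (n := d) 3 ((Nat.prime_three.coprime_iff_not_dvd).mpr h3)
    push_cast at this
    linear_combination -this
  -- representatives `≥ 1`, as the rules for `y` only concern blocks `l ≥ 1`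
  let rep : ZMod d → ℕ := fun c => c.val + d
  have hrep : ∀ c, 1 ≤ rep c ∧ (rep c : ZMod d) = c :=
    fun c => ⟨by simp only [rep]; omega, by simp [rep]⟩
  have hshift : ∀ c, (3 * rep (c + t) + 1 : ZMod d) = 3 * rep c := fun c => by
    rw [(hrep _).2, (hrep _).2]
    linear_combination ht
  let u : ZMod d → ZMod d := fun c => ((y (-3 * rep c) + 3 * rep c : ℤ) : ZMod d)
  have hones := Fintype.sum_eq_zero_of_eq_add_shift u (fun c => 3 - ((h (rep c) : ℕ) : ZMod d)) t
    fun c => by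
      simpa [u, add_sub_assoc] using R.cast_y_neg_three_mul_add_eq hy (hrep _).1 (hshift c)
  simp only [Finset.sum_sub_distrib, Finset.sum_const, Finset.card_univ, ZMod.card, nsmul_eq_mul,
    ZMod.natCast_self, zero_mul, zero_sub, neg_eq_zero] at hones
  have hone := Fin.forall_eq_one_of_sum_natCast_eq_zero (f := fun c => h (rep c)) ⟨(L : ZMod d), by
    rwa [R.h_eq_of_three_mul_eq (by omega) hy (hrep _).1 hL (by rw [(hrep _).2])]⟩
    (by rwa [ZMod.card])
  have key := R.cast_y_neg_three_mul_add_eq hy (hrep _).1 (hshift 0)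
  rw [(R.of_eq_one _ (hrep _).1 (hone 0)).1, (R.of_eq_one _ (hrep _).1 (hone (0 + t))).1,
    hone, Fin.val_one] at key
  have h2 : ((2 : ℕ) : ZMod d) = 0 := by
    push_cast at key ⊢
    linear_combination -key
  have := Nat.le_of_dvd (by norm_num) ((ZMod.natCast_eq_zero_iff _ _).mp h2)
  omega

lemma g_add_six_le (R : NeumannRules h g y) (hl : 1 ≤ l) (h0 : h l = 0) {l' : ℕ}
    (hll' : l < l') : g l + 6 ≤ g l' := by
  have := R.g_succ hl
  rw [h0, Fin.val_zero, Nat.cast_zero] at this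
  linarith [R.g_mono (by omega : 1 ≤ l + 1) hll']

lemma eq_of_cast_y_neg_three_mul_sub_eq (R : NeumannRules h g y) (hd : 7 ≤ d) {m j j' : ℕ}
    (hm : 1 ≤ m) (hj : j < 3) (hj' : j' < 3)
    (hfix : (y (-3 * m - j) : ZMod d) = ((-3 * m - j : ℤ) : ZMod d))
    (hfix' : (y (-3 * m - j') : ZMod d) = ((-3 * m - j' : ℤ) : ZMod d)) : j = j' := by
  rcases (h m).eq_zero_or_eq_one_of_two with h0 | h1
  · rw [R.y_neg_three_mul_sub_of_eq_zero hm h0 hj] at hfix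
    rw [R.y_neg_three_mul_sub_of_eq_zero hm h0 hj'] at hfix'
    have h3 : (((3 * j : ℕ) : ℤ) : ZMod d) = ((3 * j' : ℕ) : ℤ) := by
      push_cast at hfix hfix' ⊢
      linear_combination hfix - hfix'
    rw [ZMod.intCast_eq_intCast_iff_dvd_sub] at h3
    have := Int.eq_zero_of_abs_lt_dvd h3 (by rw [abs_lt]; omega)
    omega
  · obtain ⟨e0, e1, -⟩ := R.of_eq_one m hm h1
    have hne : ∀ {k : ℕ}, k < 3 → (y (-3 * m - k) : ZMod d) = ((-3 * m - k : ℤ) : ZMod d) →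
        k = 2 := fun {k} hk hfixk => by
      have h1d : ((1 : ℤ) : ZMod d) ≠ 0 := by
        rw [Ne, ZMod.intCast_zmod_eq_zero_iff_dvd]
        exact fun hdvd => by have := Int.le_of_dvd one_pos hdvd; omega
      interval_cases k
      · rw [Nat.cast_zero, sub_zero, e0] at hfixk
        exact absurd (by push_cast at hfixk ⊢; linear_combination -hfixk) h1d
      · rw [Nat.cast_one, e1] at hfixk
        exact absurd (by push_cast at hfixk ⊢; linear_combination hfixk) h1d
      · rfl
    rw [hne hj hfix, hne hj' hfix']

lemma cast_eq_of_fixed_of_mod_eq (R : NeumannRules h g y) (hD : 3 ≤ D)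
    (hy : ∀ i j : ℤ, (i : ZMod (3 * D)) = j → (y i : ZMod (3 * D)) = y j)
    {a b : ℤ} (ha : y a = a) (hb : y b = b) {ma mb ja jb : ℕ} (hma : 1 ≤ ma)
    (hja : ja < 3) (hjb : jb < 3)
    (hamj : (a : ZMod (3 * D)) = ((-3 * ma - ja : ℤ) : ZMod (3 * D)))
    (hbmj : (b : ZMod (3 * D)) = ((-3 * mb - jb : ℤ) : ZMod (3 * D)))
    (hm : ma % D = mb % D) : (a : ZMod (3 * D)) = b := by
  have h3 : ((3 * ma : ℕ) : ZMod (3 * D)) = ((3 * mb : ℕ) : ZMod (3 * D)) := by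
    rw [ZMod.natCast_eq_natCast_iff', Nat.mul_mod_mul_left, Nat.mul_mod_mul_left, hm]
  push_cast at h3
  have hfixa : (y (-3 * ma - ja) : ZMod (3 * D)) = ((-3 * ma - ja : ℤ) : ZMod (3 * D)) := by
    rw [hy _ _ hamj.symm, ha, hamj]
  have hbma : ((-3 * ma - jb : ℤ) : ZMod (3 * D)) = b := by
    rw [hbmj]
    push_cast
    linear_combination -h3
  have hfixb : (y (-3 * ma - jb) : ZMod (3 * D)) = ((-3 * ma - jb : ℤ) : ZMod (3 * D)) := by
    rw [hy _ _ hbma, hb, hbma]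
  rw [hamj, R.eq_of_cast_y_neg_three_mul_sub_eq (by omega) hma hja hjb hfixa hfixb, ← hbma]

lemma eq_of_cast_g_add_eq (R : NeumannRules h g y) (hgD : g (D + 1) = g 1 + 3 * D)
    {l l' e e' : ℕ} (hl : 1 ≤ l) (hlD : l ≤ D) (h0 : h l = 0) (he : e ≤ 4)
    (hl' : 1 ≤ l') (hl'D : l' ≤ D) (h0' : h l' = 0) (he' : e' ≤ 4)
    (hcast : ((g l + e : ℤ) : ZMod (3 * D)) = ((g l' + e' : ℤ) : ZMod (3 * D))) :
    l = l' ∧ e = e' := by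
  have hbound : ∀ {k : ℕ}, 1 ≤ k → k ≤ D → h k = 0 → g 1 ≤ g k ∧ g k + 6 ≤ g 1 + 3 * D :=
    fun hk hkD hk0 => ⟨R.g_mono le_rfl hk, hgD ▸ R.g_add_six_le hk hk0 (by omega)⟩
  obtain ⟨hlo, hhi⟩ := hbound hl hlD h0
  obtain ⟨hlo', hhi'⟩ := hbound hl' hl'D h0'
  rw [ZMod.intCast_eq_intCast_iff_dvd_sub] at hcast
  have hg : g l + e = g l' + e' := by
    have := Int.eq_zero_of_abs_lt_dvd hcast (by rw [abs_lt]; push_cast; omega)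
    omega
  have hll' : l = l' := by
    rcases lt_trichotomy l l' with hlt | heq | hgt
    · linarith [R.g_add_six_le hl h0 hlt]
    · exact heq
    · linarith [R.g_add_six_le hl' h0' hgt]
  subst hll'
  exact ⟨rfl, by omega⟩

lemma three_mul_card_filter_eq_zero_le (R : NeumannRules h g y) (hD : 3 ≤ D)
    (hy : ∀ i j : ℤ, (i : ZMod (3 * D)) = j → (y i : ZMod (3 * D)) = y j)
    (hgD : g (D + 1) = g 1 + 3 * D) :
    3 * ((Finset.Icc 1 D).filter fun l => h l = 0).card ≤ D := by
  set S := ((Finset.Icc 1 D).filter fun l => h l = 0) ×ˢ ({0, 2, 4} : Finset ℕ)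
  have hmem : ∀ p ∈ S, (1 ≤ p.1 ∧ p.1 ≤ D ∧ h p.1 = 0) ∧ (p.2 = 0 ∨ p.2 = 2 ∨ p.2 = 4) :=
    fun p hp => by simpa [S, and_assoc] using hp
  have hfix : ∀ p ∈ S, y (g p.1 + p.2) = g p.1 + p.2 := fun p hp => by
    obtain ⟨⟨hl, -, h0⟩, he⟩ := hmem p hp
    obtain ⟨e0, e2, e4, -⟩ := R.of_eq_zero p.1 hl h0
    rcases he with he | he | he <;> simpa [he]
  choose m hm j hj hmj using exists_cast_eq_neg_three_mul_sub (D := D) (by omega)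
  have hcard := Finset.card_le_card_of_injOn (fun p : ℕ × ℕ => m (g p.1 + p.2) % D)
    (t := Finset.range D) (fun p _ => Finset.mem_range.mpr (Nat.mod_lt _ (by omega)))
    fun p hp q hq hpq => by
      obtain ⟨⟨hl, hlD, h0⟩, he⟩ := hmem p hp
      obtain ⟨⟨hl', hl'D, h0'⟩, he'⟩ := hmem q hq
      have := R.eq_of_cast_g_add_eq hgD hl hlD h0 (by omega) hl' hl'D h0' (by omega)
        (R.cast_eq_of_fixed_of_mod_eq hD hy (hfix p hp) (hfix q hq) (hm _) (hj _) (hj _)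
          (hmj _) (hmj _) hpq)
      exact Prod.ext this.1 this.2
  simpa [S, Finset.card_product, mul_comm] using hcard

lemma five_mul_sum_eq (R : NeumannRules h g y) (hD : 1 ≤ D)
    (hy : ∀ i j : ℤ, (i : ZMod (3 * D)) = j → (y i : ZMod (3 * D)) = y j)
    (hone : ∃ l ∈ Finset.Icc 1 D, h l = 1) :
    5 * ∑ i ∈ Finset.Icc 1 D, ((h i : ℕ) : ℤ) = 3 * D := by
  set σ := ∑ i ∈ Finset.Icc 1 D, ((h i : ℕ) : ℤ)
  have hσ := Finset.sum_natCast_val_add_card_filter_eq_zero (Finset.Icc 1 D) h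
  obtain ⟨l, hl, hl1⟩ := hone
  have hσ1 : 1 ≤ σ := by
    simpa [hl1] using Finset.single_le_sum (f := fun i => ((h i : ℕ) : ℤ)) (by simp) hl
  have hper :=
    R.g_cast_eq_of_three_mul_eq (by omega) hy (by omega) le_rfl (three_mul_natCast_add_eq D 1)
  rw [R.g_eq _ (by omega), R.g_one, Nat.add_sub_cancel_left, add_comm 1 D,
    ZMod.intCast_eq_intCast_iff_dvd_sub] at hper
  obtain ⟨k, hk⟩ := hper
  simp only [Nat.card_Icc, Nat.add_sub_cancel] at hσ
  have hk0 : k < 0 := by by_contra; push_cast at hk; nlinarith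
  have hk2 : -2 < k := by by_contra; push_cast at hk; nlinarith
  obtain rfl : k = -1 := by omega
  push_cast at hk
  linarith

theorem false_of_three_dvd (R : NeumannRules h g y) (hD : 1 ≤ D)
    (hy : ∀ i j : ℤ, (i : ZMod (3 * D)) = j → (y i : ZMod (3 * D)) = y j)
    {L : ℕ} (hL : 1 ≤ L) (hL1 : h L = 1) : False := by
  have hper : ∀ l, 1 ≤ l → h (l + D) = h l := fun l hl =>
    R.h_eq_of_three_mul_eq (by omega) hy (by omega) hl (three_mul_natCast_add_eq D l)
  obtain ⟨l, hl, hlL⟩ := exists_mem_Icc_eq_of_add_period hD hper hL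
  have h5 := R.five_mul_sum_eq hD hy ⟨l, hl, hlL.trans hL1⟩
  have hσ := Finset.sum_natCast_val_add_card_filter_eq_zero (Finset.Icc 1 D) h
  simp only [Nat.card_Icc, Nat.add_sub_cancel] at hσ
  have hgD : g (D + 1) = g 1 + 3 * D := by
    rw [R.g_eq _ (by omega), R.g_one, Nat.add_sub_cancel]
    push_cast
    linarith
  have := R.three_mul_card_filter_eq_zero_le (by omega) hy hgD
  omega

theorem not_forall_cast_y_eq (R : NeumannRules h g y) {L : ℕ} (hL : 1 ≤ L) (hL1 : h L = 1)
    (hd : 2 ≤ d) : ¬ ∀ i j : ℤ, (i : ZMod d) = j → (y i : ZMod d) = y j := by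
  intro hy
  rcases hd.eq_or_lt with rfl | hd3
  · exact R.false_of_two hy
  by_cases h3 : 3 ∣ d
  · obtain ⟨D, rfl⟩ := h3
    exact R.false_of_three_dvd (by omega) hy hL hL1
  · exact R.false_of_not_three_dvd hd3 h3 hy hL hL1

theorem modEq_three_of_forall_eq_zero (R : NeumannRules h g y)
    (hall : ∀ l : ℕ, 1 ≤ l → h l = 0) (i : ℤ) : y i ≡ i [ZMOD 3] := by
  have hg : ∀ l : ℕ, 1 ≤ l → g l = 6 * l - 4 := fun l hl => by
    rw [R.g_eq l hl, Finset.sum_eq_zero fun i hi => by simp [hall i (Finset.mem_Icc.mp hi).1]]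
    ring
  unfold Int.ModEq
  rcases le_or_gt 2 i with hi | hi
  · obtain ⟨l, hl, e, he0, he6, rfl⟩ : ∃ l : ℕ, 1 ≤ l ∧ ∃ e : ℤ, 0 ≤ e ∧ e < 6 ∧ i = g l + e :=
      ⟨((i - 2) / 6 + 1).toNat, by omega, (i - 2) % 6, by omega, by omega,
        by rw [hg _ (by omega)]; omega⟩
    obtain ⟨f0, f2, f4, e1, -, e3, -, e5, -⟩ := R.of_eq_zero l hl (hall l hl)
    have := hg l hl
    interval_cases e <;> simp only [add_zero, f0, f2, f4, e1, e3, e5] <;> omega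
  rcases lt_or_ge i (-2) with hi' | hi'
  · obtain ⟨l, hl, j, hj0, hj3, rfl⟩ : ∃ l : ℕ, 1 ≤ l ∧ ∃ j : ℤ, 0 ≤ j ∧ j < 3 ∧ i = -3 * l - j :=
      ⟨(-i / 3).toNat, by omega, (-i) % 3, by omega, by omega, by omega⟩
    obtain ⟨-, -, -, -, n0, -, n1, -, n2⟩ := R.of_eq_zero l hl (hall l hl)
    have := hg l hl
    interval_cases j <;> simp only [sub_zero, n0, n1, n2] <;> omega
  interval_cases i
  · rw [R.y_neg_two]; rfl
  · rw [R.y_neg_one]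
  · rw [R.y_zero]
  · rw [R.y_one]; rfl

end NeumannRules

theorem neumann_Mh_maximal_iff_general (h : ℕ → Fin 2) (g : ℕ → ℤ)
    (hg : ∀ l : ℕ, 1 ≤ l →
      g l = 6 * (l : ℤ) - 5 * (∑ i ∈ Finset.Icc 1 (l - 1), ((h i : ℕ) : ℤ)) - 4)
    (y z : Equiv.Perm ℤ)
    (hy₀ : y 0 = 0) (hy₁ : y (-1) = -1) (hy₂ : y 1 = -2) (hy₃ : y (-2) = 1)
    (hyA : ∀ l : ℕ, 1 ≤ l → h l = 0 →
      y (g l) = g l ∧ y (g l + 2) = g l + 2 ∧ y (g l + 4) = g l + 4 ∧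
      y (g l + 1) = -3 * (l : ℤ) ∧ y (-3 * (l : ℤ)) = g l + 1 ∧
      y (g l + 3) = -3 * (l : ℤ) - 1 ∧ y (-3 * (l : ℤ) - 1) = g l + 3 ∧
      y (g l + 5) = -3 * (l : ℤ) - 2 ∧ y (-3 * (l : ℤ) - 2) = g l + 5)
    (hyB : ∀ l : ℕ, 1 ≤ l → h l = 1 →
      y (-3 * (l : ℤ)) = -3 * (l : ℤ) - 1 ∧ y (-3 * (l : ℤ) - 1) = -3 * (l : ℤ) ∧
      y (g l) = -3 * (l : ℤ) - 2 ∧ y (-3 * (l : ℤ) - 2) = g l)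
    (hz : ∀ i : ℤ, z i = i + 1)
    (φ : Tri 3 2 →* Equiv.Perm ℤ)
    (hφY : φ (triY 3 2) = y) (hφZ : φ (triZ 3 2) = z) :
    IsCoatom (Subgroup.comap φ (MulAction.stabilizer (Equiv.Perm ℤ) (0 : ℤ)))
      ↔ ¬ (∀ l : ℕ, 1 ≤ l → h l = 0) := by
  have R : NeumannRules h g y := ⟨hg, hy₀, hy₁, hy₂, hy₃, hyA, hyB⟩
  have hζ : φ (triZ 3 2) = Equiv.addRight 1 := hφZ.trans (Equiv.ext hz)
  rw [isCoatom_comap_stabilizer_zero_iff hζ]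
  constructor
  · intro hmax hzero
    obtain ⟨w, hw⟩ := hmax 3 (by norm_num)
    have hgen : Subgroup.closure {triY 3 2, triZ 3 2} ≤ (modEqSubgroup 3).comap φ := by
      rw [Subgroup.closure_le]
      rintro _ (rfl | rfl)
      · exact Subgroup.mem_comap.mpr
          (hφY ▸ mem_modEqSubgroup_of_modEq (R.modEq_three_of_forall_eq_zero hzero))
      · exact Subgroup.mem_comap.mpr (hζ ▸ addRight_mem_modEqSubgroup 3 1)
    exact hw (hgen (closure_triY_triZ 3 2 ▸ Subgroup.mem_top w))
  · intro hnot d hd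
    obtain ⟨L, hL, hL1⟩ : ∃ L, 1 ≤ L ∧ h L = 1 := by
      obtain ⟨L, hL, hL0⟩ := not_forall₂.mp hnot
      exact ⟨L, hL, (h L).eq_zero_or_eq_one_of_two.resolve_left hL0⟩
    refine ⟨triY 3 2, fun hmem => R.not_forall_cast_y_eq hL hL1 hd fun i j hij => ?_⟩
    rw [hφY] at hmem
    exact (hmem i j).mpr hij

/-- Neumann's construction: given a 0-1 sequence `h` (indexed from 1), with the
associated sequence `g`, the permutation `y` of ℤ determined by the listed rules,
the translation `z : i ↦ i + 1`, and the resulting action `φ` of the modular group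
Γ = Δ(3,2,∞) on ℤ (with Y ↦ y and Z ↦ z), the Neumann subgroup M_h — the stabiliser
of 0 — is a maximal subgroup of Γ if and only if `h` is not identically 0. -/
theorem neumann_Mh_maximal_iff (h : ℕ → Fin 2) (g : ℕ → ℤ)
    (hg : ∀ l : ℕ, 1 ≤ l →
      g l = 6 * (l : ℤ) - 5 * (∑ i ∈ Finset.Icc 1 (l - 1), ((h i : ℕ) : ℤ)) - 4)
    (y z : Equiv.Perm ℤ)
    (hy₀ : y 0 = 0) (hy₁ : y (-1) = -1) (hy₂ : y 1 = -2) (hy₃ : y (-2) = 1)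
    (hyA : ∀ l : ℕ, 1 ≤ l → h l = 0 →
      y (g l) = g l ∧ y (g l + 2) = g l + 2 ∧ y (g l + 4) = g l + 4 ∧
      y (g l + 1) = -3 * (l : ℤ) ∧ y (-3 * (l : ℤ)) = g l + 1 ∧
      y (g l + 3) = -3 * (l : ℤ) - 1 ∧ y (-3 * (l : ℤ) - 1) = g l + 3 ∧
      y (g l + 5) = -3 * (l : ℤ) - 2 ∧ y (-3 * (l : ℤ) - 2) = g l + 5)
    (hyB : ∀ l : ℕ, 1 ≤ l → h l = 1 →
      y (-3 * (l : ℤ)) = -3 * (l : ℤ) - 1 ∧ y (-3 * (l : ℤ) - 1) = -3 * (l : ℤ) ∧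
      y (g l) = -3 * (l : ℤ) - 2 ∧ y (-3 * (l : ℤ) - 2) = g l)
    (hz : ∀ i : ℤ, z i = i + 1)
    (φ : Tri 3 2 →* Equiv.Perm ℤ)
    (hφY : φ (triY 3 2) = y) (hφZ : φ (triZ 3 2) = z)
    (htrans : ∀ s t : ℤ, ∃ w : Tri 3 2, φ w s = t) :
    IsCoatom (Subgroup.comap φ (MulAction.stabilizer (Equiv.Perm ℤ) (0 : ℤ)))
      ↔ ¬ (∀ l : ℕ, 1 ≤ l → h l = 0) :=
  neumann_Mh_maximal_iff_general h g hg y z hy₀ hy₁ hy₂ hy₃ hyA hyB hz φ hφY hφZ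
end
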